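/- For every odd integer n ≥ 1, N(M_{n,α}) = 2^{(n+3)/2}·w_n − 2^n − 1, where w_n is the coefficient of √2 in (1+√2)^n. -/

import Mathlib

/-- `α = 2 + √2` in `ℤ√2`. -/
def alphaZ : ℤ√2 := 2 + Zsqrtd.sqrtd

/-- The Mersenne number `M_{n,α} = (α^n - 1)/(α - 1) = (α^n - 1)·(√2 - 1)` in `ℤ√2`,
where `α = 2 + √2` (note `(α - 1)⁻¹ = (1 + √2)⁻¹ = √2 - 1`). -/
def Mers (n : ℕ) : ℤ√2 := (alphaZ ^ n - 1) * (Zsqrtd.sqrtd - 1)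

/-- `v n` is the rational part of `(1 + √2)^n`, i.e. `(1+√2)^n = v n + (w n)·√2`. -/
def vCoeff (n : ℕ) : ℤ := (((1 + Zsqrtd.sqrtd : ℤ√2)) ^ n).re

/-- `w n` is the coefficient of `√2` in `(1 + √2)^n`, i.e. `(1+√2)^n = v n + (w n)·√2`. -/
def wCoeff (n : ℕ) : ℤ := (((1 + Zsqrtd.sqrtd : ℤ√2)) ^ n).im

/-! Since `α = √2·(1+√2)`, for `n = 2k+1` we get `α^n = 2^k·√2·(1+√2)^n`, whose rational part is
`2^(k+1)·w_n`. Expanding `N(x - 1) = N(x) - 2·re x + 1` with `N(α^n) = 2^n` and `N(√2 - 1) = -1`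
gives the formula. -/

namespace Zsqrtd

variable {d : ℤ}

theorem norm_pow (x : ℤ√d) (n : ℕ) : (x ^ n).norm = x.norm ^ n :=
  map_pow normMonoidHom x n

theorem norm_sub_one (x : ℤ√d) : (x - 1).norm = x.norm - 2 * x.re + 1 := by
  simp only [norm_def, re_sub, im_sub, re_one, im_one]
  ring

theorem sqrtd_pow_two_mul_add_one (k : ℕ) :
    (sqrtd : ℤ√d) ^ (2 * k + 1) = ((d ^ k : ℤ) : ℤ√d) * sqrtd := by
  rw [pow_succ, pow_mul, sq, dmuld, Int.cast_pow]

end Zsqrtd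

open Zsqrtd

theorem alphaZ_eq_sqrtd_mul : alphaZ = sqrtd * (1 + sqrtd) := by
  rw [mul_one_add, dmuld, alphaZ, add_comm]
  rfl

theorem norm_alphaZ : alphaZ.norm = 2 := by
  decide

theorem norm_Mers (n : ℕ) : (Mers n).norm = 2 * (alphaZ ^ n).re - 2 ^ n - 1 := by
  have norm_sqrtd_sub_one : (sqrtd - 1 : ℤ√2).norm = -1 := by decide
  rw [Mers, norm_mul, norm_sqrtd_sub_one, norm_sub_one, norm_pow, norm_alphaZ]
  ring

theorem re_alphaZ_pow_two_mul_add_one (k : ℕ) :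
    (alphaZ ^ (2 * k + 1)).re = 2 ^ (k + 1) * wCoeff (2 * k + 1) := by
  rw [alphaZ_eq_sqrtd_mul, mul_pow, sqrtd_pow_two_mul_add_one, mul_assoc, re_smul, wCoeff]
  simp only [re_mul, re_sqrtd, im_sqrtd]
  ring

theorem norm_mersenne_eq_pow_mul_w_sub_general (n : ℕ) (hodd : Odd n) :
    Zsqrtd.norm (Mers n) = 2 ^ ((n + 3) / 2) * wCoeff n - 2 ^ n - 1 := by
  obtain ⟨k, rfl⟩ := hodd
  rw [norm_Mers, re_alphaZ_pow_two_mul_add_one, show (2 * k + 1 + 3) / 2 = k + 2 by omega]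
  ring

/-- **(Property 2, §1).** For odd `n ≥ 1`,
`N(M_{n,α}) = 2^((n+3)/2)·w_n - 2^n - 1`, where `(1+√2)^n = v_n + w_n√2`. -/
theorem norm_mersenne_eq_pow_mul_w_sub (n : ℕ) (hn : 1 ≤ n) (hodd : Odd n) :
    Zsqrtd.norm (Mers n) = 2 ^ ((n + 3) / 2) * wCoeff n - 2 ^ n - 1 :=
  norm_mersenne_eq_pow_mul_w_sub_general n hodd
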